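/- arXiv:1306.4524 — 2 statements merged into one kernel-verified Lean document; each statement's English description precedes it below -/
import Mathlib

section
/- For M ∈ ℕ with M ≥ 2 and any X ≥ 1 and k ∈ ℕ, define the restricted divisor function τ_X(m) = #{q ≤ X : q divides m}. Then Σ_{m ≤ M} τ_X(m)^{2k} ≤ M · Σ_{l ≤ X^{2k}} τ(l)^{2k}/l, where τ is the usual divisor function. Consequently Σ_{m ≤ M} τ_X(m)^{2k} ≪_{ε,k} M X^ε. -/
/-!
Expanding the power, `∑_{m ≤ M} τ_X(m)^n` counts pairs `(m, q)` with `q ∈ [1, X]^n` and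
`lcm q ∣ m`, and there are at most `M / lcm q` such `m` for each `q`. Grouping the tuples `q` by
`l = lcm q ≤ X^n`, a fibre consists of tuples of divisors of `l`, so it has at most `τ(l)^n`
elements. For the second bound, the divisor bound `τ(l) ≪_δ l^δ` reduces the sum over `l ≤ Y` to
`∑_{l ≤ Y} l^(s-1) ≤ Y^s / s`, which is `≪ X^ε` for `Y = X^(2k)` and `s ≤ ε / (2k)`.
-/

open Finset

theorem Real.mul_rpow_sub_one_le_rpow_sub_rpow {x s : ℝ} (hx : 1 ≤ x) (hs₀ : 0 < s) (hs₁ : s ≤ 1) :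
    s * x ^ (s - 1) ≤ x ^ s - (x - 1) ^ s := by
  have hx₀ : 0 < x := by linarith
  have hinv : x⁻¹ ≤ 1 := inv_le_one_of_one_le₀ hx
  have bernoulli : (1 + -x⁻¹) ^ s ≤ 1 + s * -x⁻¹ :=
    rpow_one_add_le_one_add_mul_self (by linarith) hs₀.le hs₁
  have hfactor : (x - 1) ^ s = x ^ s * (1 + -x⁻¹) ^ s := by
    rw [← Real.mul_rpow hx₀.le (by linarith)]
    congr 1
    field_simp
    ring
  rw [hfactor, Real.rpow_sub_one hx₀.ne']
  have := mul_le_mul_of_nonneg_left bernoulli (Real.rpow_nonneg hx₀.le s)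
  have : x ^ s * (1 + s * -x⁻¹) = x ^ s - s * (x ^ s / x) := by ring
  linarith

theorem Real.sum_Icc_rpow_sub_one_le {s : ℝ} (hs₀ : 0 < s) (hs₁ : s ≤ 1) (Y : ℕ) :
    ∑ l ∈ Icc 1 Y, (l : ℝ) ^ (s - 1) ≤ (Y : ℝ) ^ s / s := by
  induction Y with
  | zero => simp [Real.zero_rpow hs₀.ne']
  | succ Y ih =>
    rw [sum_Icc_succ_top (by omega), le_div_iff₀ hs₀]
    have step := Real.mul_rpow_sub_one_le_rpow_sub_rpow (x := (Y + 1 : ℕ)) (by simp) hs₀ hs₁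
    rw [le_div_iff₀ hs₀] at ih
    push_cast at step ⊢
    rw [add_sub_cancel_right] at step
    nlinarith

theorem Real.add_one_le_mul_exp {c x : ℝ} (hc : 0 < c) (hx : 0 ≤ x) :
    x + 1 ≤ (1 + c⁻¹) * Real.exp (c * x) := by
  calc x + 1 ≤ (1 + c⁻¹) * (c * x + 1) := by
        have : (1 + c⁻¹) * (c * x + 1) = x + 1 + (c * x + c⁻¹) := by field_simp; ring
        rw [this]; have := inv_pos.2 hc; nlinarith
    _ ≤ (1 + c⁻¹) * Real.exp (c * x) :=
        mul_le_mul_of_nonneg_left (Real.add_one_le_exp _) (by positivity)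

theorem Real.natCast_add_one_le_mul_pow_rpow {b δ : ℝ} (hb : 2 ≤ b) (hδ : 0 < δ) (a : ℕ) :
    (a + 1 : ℝ) ≤ (1 + (δ * Real.log 2)⁻¹) * (b ^ a) ^ δ := by
  have hlog : 0 < Real.log 2 := Real.log_pos one_lt_two
  refine (Real.add_one_le_mul_exp (c := δ * Real.log 2) (by positivity)
    (Nat.cast_nonneg a)).trans ?_
  refine mul_le_mul_of_nonneg_left ?_ (by positivity)
  rw [Real.rpow_def_of_pos (by positivity), Real.log_pow, Real.exp_le_exp]
  have := Real.log_le_log (by norm_num) hb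
  have : δ * Real.log 2 * a ≤ δ * Real.log b * a := by gcongr
  linarith

theorem Real.natCast_add_one_le_pow_rpow {b δ : ℝ} (hb : 0 ≤ b) (hbδ : 2 ≤ b ^ δ) (a : ℕ) :
    (a + 1 : ℝ) ≤ (b ^ a) ^ δ := by
  rw [← Real.rpow_pow_comm hb]
  calc (a + 1 : ℝ) ≤ 2 ^ a := by exact_mod_cast Nat.lt_two_pow_self
    _ ≤ (b ^ δ) ^ a := pow_le_pow_left₀ zero_le_two hbδ a

theorem Nat.exists_card_divisors_le_mul_rpow {δ : ℝ} (hδ : 0 < δ) :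
    ∃ C > 0, ∀ n : ℕ, n ≠ 0 → (#n.divisors : ℝ) ≤ C * (n : ℝ) ^ δ := by
  set B : ℝ := 1 + (δ * Real.log 2)⁻¹
  have hB : 1 ≤ B := le_add_of_nonneg_right (by positivity)
  -- Only the primes `p < 2 ^ δ⁻¹` can contribute a factor `> 1` to `τ(n) / n^δ`.
  set K : ℕ := ⌈(2 : ℝ) ^ δ⁻¹⌉₊
  refine ⟨B ^ K, by positivity, fun n hn => ?_⟩
  have local_bound : ∀ p ∈ n.primeFactors, (n.factorization p + 1 : ℝ) ≤
      (if p < K then B else 1) * ((p : ℝ) ^ n.factorization p) ^ δ := by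
    intro p hp
    have hp₂ : (2 : ℝ) ≤ p := by exact_mod_cast (Nat.prime_of_mem_primeFactors hp).two_le
    split_ifs with hpK
    · exact Real.natCast_add_one_le_mul_pow_rpow hp₂ hδ _
    · rw [one_mul]
      refine Real.natCast_add_one_le_pow_rpow (by positivity) ?_ _
      have hKp : (2 : ℝ) ^ δ⁻¹ ≤ p := (Nat.le_ceil _).trans (by exact_mod_cast not_lt.1 hpK)
      calc (2 : ℝ) = ((2 : ℝ) ^ δ⁻¹) ^ δ := by
            rw [← Real.rpow_mul zero_le_two, inv_mul_cancel₀ hδ.ne', Real.rpow_one]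
        _ ≤ (p : ℝ) ^ δ := by gcongr
  have small_primes : ∏ p ∈ n.primeFactors, (if p < K then B else 1) ≤ B ^ K := by
    rw [prod_ite, prod_const, prod_const_one, mul_one]
    refine pow_le_pow_right₀ hB ((card_le_card fun p hp => ?_).trans (card_range K).le)
    exact mem_range.2 (mem_filter.1 hp).2
  have hn_prod : (n : ℝ) = ∏ p ∈ n.primeFactors, (p : ℝ) ^ n.factorization p := by
    exact_mod_cast Nat.prod_primeFactors_pow_factorization hn
  calc (#n.divisors : ℝ) = ∏ p ∈ n.primeFactors, (n.factorization p + 1 : ℝ) := by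
        rw [Nat.card_divisors hn]; push_cast; rfl
    _ ≤ ∏ p ∈ n.primeFactors, (if p < K then B else 1) * ((p : ℝ) ^ n.factorization p) ^ δ :=
        prod_le_prod (fun _ _ => by positivity) local_bound
    _ = (∏ p ∈ n.primeFactors, (if p < K then B else 1)) * (n : ℝ) ^ δ := by
        rw [prod_mul_distrib, hn_prod, Real.finsetProd_rpow _ _ fun _ _ => by positivity]
    _ ≤ B ^ K * (n : ℝ) ^ δ := by gcongr

theorem Nat.exists_sum_Icc_card_divisors_pow_div_le (n : ℕ) {η : ℝ} (hη : 0 < η) :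
    ∃ D > 0, ∀ Y : ℕ, 1 ≤ Y →
      ∑ l ∈ Icc 1 Y, (#l.divisors : ℝ) ^ n / l ≤ D * (Y : ℝ) ^ η := by
  set s := min η 1
  have hs₀ : 0 < s := lt_min hη one_pos
  obtain ⟨C, hC, hdiv⟩ := Nat.exists_card_divisors_le_mul_rpow (δ := s / (n + 1)) (by positivity)
  refine ⟨C ^ n / s, by positivity, fun Y hY => ?_⟩
  have term_bound : ∀ l ∈ Icc 1 Y, (#l.divisors : ℝ) ^ n / l ≤ C ^ n * (l : ℝ) ^ (s - 1) := by
    intro l hl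
    have hl₁ : (1 : ℝ) ≤ l := by exact_mod_cast (mem_Icc.1 hl).1
    have hl₀ : (l : ℝ) ≠ 0 := by positivity
    have hexp : n * (s / (n + 1)) ≤ s := by
      rw [mul_div_assoc', div_le_iff₀ (by positivity)]; nlinarith
    calc (#l.divisors : ℝ) ^ n / l ≤ (C * (l : ℝ) ^ (s / (n + 1))) ^ n / l := by
          gcongr; exact hdiv l (by exact_mod_cast hl₀)
      _ = C ^ n * (l : ℝ) ^ (n * (s / (n + 1))) / l := by
          rw [mul_pow, ← Real.rpow_mul_natCast (Nat.cast_nonneg l), mul_comm (s / _)]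
      _ ≤ C ^ n * (l : ℝ) ^ s / l := by gcongr
      _ = C ^ n * (l : ℝ) ^ (s - 1) := by rw [Real.rpow_sub_one hl₀, mul_div_assoc]
  calc ∑ l ∈ Icc 1 Y, (#l.divisors : ℝ) ^ n / l ≤ ∑ l ∈ Icc 1 Y, C ^ n * (l : ℝ) ^ (s - 1) :=
        sum_le_sum term_bound
    _ ≤ C ^ n * ((Y : ℝ) ^ s / s) := by
        rw [← mul_sum]; gcongr; exact Real.sum_Icc_rpow_sub_one_le hs₀ (min_le_right _ _) Y
    _ ≤ C ^ n / s * (Y : ℝ) ^ η := by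
        rw [mul_div_assoc', div_mul_eq_mul_div]
        gcongr
        exacts [by exact_mod_cast hY, min_le_left _ _]

theorem card_filter_dvd_pow (X m n : ℕ) :
    #{q ∈ Icc 1 X | q ∣ m} ^ n =
      #{q ∈ Fintype.piFinset fun _ : Fin n => Icc 1 X | ∀ i, q i ∣ m} := by
  rw [← Fintype.card_piFinset_const]
  congr 1
  ext q
  simp only [Fintype.mem_piFinset, mem_filter, forall_and]

theorem card_filter_forall_dvd {ι : Type*} [Fintype ι] (M : ℕ) (q : ι → ℕ) :
    #{m ∈ Icc 1 M | ∀ i, q i ∣ m} = M / univ.lcm q := by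
  rw [← Nat.Ioc_filter_dvd_card_eq_div, ← Icc_add_one_left_eq_Ioc, zero_add]
  simp only [Finset.lcm_dvd_iff, mem_univ, true_implies]

theorem card_filter_lcm_eq_le {ι : Type*} [Fintype ι] [DecidableEq ι] {l : ℕ} (hl : l ≠ 0)
    (s : Finset (ι → ℕ)) : #{q ∈ s | univ.lcm q = l} ≤ #l.divisors ^ Fintype.card ι := by
  rw [← card_univ, ← prod_const, ← Fintype.card_piFinset]
  refine card_le_card fun q hq => Fintype.mem_piFinset.2 fun i => ?_
  refine Nat.mem_divisors.2 ⟨?_, hl⟩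
  rw [← (mem_filter.1 hq).2]
  exact dvd_lcm (mem_univ i)

theorem lcm_mem_Icc_of_mem_piFinset {n X : ℕ} {q : Fin n → ℕ}
    (hq : q ∈ Fintype.piFinset fun _ => Icc 1 X) : univ.lcm q ∈ Icc 1 (X ^ n) := by
  have hq' : ∀ i, 1 ≤ q i ∧ q i ≤ X := fun i => mem_Icc.1 (Fintype.mem_piFinset.1 hq i)
  have hprod : 0 < ∏ i, q i := prod_pos fun i _ => (hq' i).1
  refine mem_Icc.2 ⟨Nat.pos_of_ne_zero fun h => ?_, ?_⟩
  · obtain ⟨i, -, hi⟩ := lcm_eq_zero_iff.1 h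
    exact Nat.one_le_iff_ne_zero.1 (hq' i).1 hi
  · calc univ.lcm q ≤ ∏ i, q i := Nat.le_of_dvd hprod (lcm_dvd_prod _ _)
      _ ≤ ∏ _i : Fin n, X := prod_le_prod' fun i _ => (hq' i).2
      _ = X ^ n := by simp

theorem sum_card_filter_dvd_pow_eq (M X n : ℕ) :
    ∑ m ∈ Icc 1 M, #{q ∈ Icc 1 X | q ∣ m} ^ n =
      ∑ q ∈ Fintype.piFinset (fun _ : Fin n => Icc 1 X), M / univ.lcm q := by
  simp only [card_filter_dvd_pow, ← card_filter_forall_dvd]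
  -- The two sides decide `∀ i, q i ∣ m` through different (equal) instances.
  convert sum_card_bipartiteAbove_eq_sum_card_bipartiteBelow (s := Icc 1 M)
      (t := Fintype.piFinset fun _ : Fin n => Icc 1 X) fun m q => ∀ i, q i ∣ m using 4 <;>
    exact filter_congr_decidable _ _ _

theorem sum_card_filter_dvd_pow_le (M X n : ℕ) :
    ∑ m ∈ Icc 1 M, (#{q ∈ Icc 1 X | q ∣ m} : ℝ) ^ n ≤
      M * ∑ l ∈ Icc 1 (X ^ n), (#l.divisors : ℝ) ^ n / l := by
  have double_count := sum_card_filter_dvd_pow_eq M X n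
  set Q := Fintype.piFinset fun _ : Fin n => Icc 1 X
  calc ∑ m ∈ Icc 1 M, (#{q ∈ Icc 1 X | q ∣ m} : ℝ) ^ n
      = ∑ q ∈ Q, ((M / univ.lcm q : ℕ) : ℝ) := by exact_mod_cast double_count
    _ ≤ ∑ q ∈ Q, (M : ℝ) / univ.lcm q := sum_le_sum fun _ _ => Nat.cast_div_le
    _ = ∑ l ∈ Icc 1 (X ^ n), ∑ q ∈ Q with univ.lcm q = l, (M : ℝ) / l :=
        (sum_fiberwise_of_maps_to' (fun _ => lcm_mem_Icc_of_mem_piFinset)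
          fun l => (M : ℝ) / l).symm
    _ = ∑ l ∈ Icc 1 (X ^ n), #{q ∈ Q | univ.lcm q = l} * ((M : ℝ) / l) := by
        simp only [sum_const, nsmul_eq_mul]
    _ ≤ ∑ l ∈ Icc 1 (X ^ n), (#l.divisors : ℝ) ^ n * ((M : ℝ) / l) := by
        refine sum_le_sum fun l hl => ?_
        gcongr
        have := card_filter_lcm_eq_le (ι := Fin n) (Nat.one_le_iff_ne_zero.1 (mem_Icc.1 hl).1) Q
        rw [Fintype.card_fin] at this
        exact_mod_cast this
    _ = M * ∑ l ∈ Icc 1 (X ^ n), (#l.divisors : ℝ) ^ n / l := by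
        rw [mul_sum]; exact sum_congr rfl fun _ _ => by ring

theorem stmt_4 (ε : ℝ) (hε : 0 < ε) (k : ℕ) (hk : 1 ≤ k) :
    ∃ D : ℝ, 0 < D ∧ ∀ M X : ℕ, 2 ≤ M → 1 ≤ X →
      (∑ m ∈ Finset.Icc 1 M,
          (((Finset.Icc 1 X).filter (fun q => q ∣ m)).card : ℝ) ^ (2 * k) ≤
        (M : ℝ) * ∑ l ∈ Finset.Icc 1 (X ^ (2 * k)),
          ((l.divisors.card : ℝ) ^ (2 * k)) / l) ∧
      ∑ m ∈ Finset.Icc 1 M,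
          (((Finset.Icc 1 X).filter (fun q => q ∣ m)).card : ℝ) ^ (2 * k) ≤
        D * M * (X : ℝ) ^ ε := by
  have hk₀ : (0 : ℝ) < 2 * k := mul_pos two_pos (by exact_mod_cast hk)
  obtain ⟨D, hD, hsum⟩ := Nat.exists_sum_Icc_card_divisors_pow_div_le (2 * k) (div_pos hε hk₀)
  refine ⟨D, hD, fun M X _ hX => ?_⟩
  have moment_bound := sum_card_filter_dvd_pow_le M X (2 * k)
  refine ⟨moment_bound, moment_bound.trans ?_⟩
  have hXpow : ((X ^ (2 * k) : ℕ) : ℝ) ^ (ε / (2 * k)) = (X : ℝ) ^ ε := by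
    rw [Nat.cast_pow, ← Real.rpow_natCast, ← Real.rpow_mul (Nat.cast_nonneg X)]
    push_cast
    rw [mul_div_cancel₀ _ hk₀.ne']
  calc (M : ℝ) * ∑ l ∈ Icc 1 (X ^ (2 * k)), (#l.divisors : ℝ) ^ (2 * k) / l
      ≤ M * (D * ((X ^ (2 * k) : ℕ) : ℝ) ^ (ε / (2 * k))) := by
        gcongr; exact_mod_cast hsum _ (Nat.one_le_pow _ _ hX)
    _ = D * M * (X : ℝ) ^ ε := by rw [hXpow]; ring
end

section
/- Define V(q) = q^{−s} Σ_{(a1,a2): gcd(a1,a2,q)=1} Π_{i=1}^{s} V(q, λ_i a1, λ_i a2), where V(q,b1,b2) = Σ_{r=1}^{q} e((b2 r² + b1 r)/q) and λ1,...,λs are fixed nonzero integers. Then V is multiplicative: if gcd(q,t) = 1 then V(qt) = V(q) V(t). -/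
/-!
All the sums involved are periodic in the modulus, so they live on `ZMod N`, and
`V(N, b₁, b₂)` is the quadratic sum `∑ r, ψ_N (b₂ r² + b₁ r)` for the standard character `ψ_N`
of `ZMod N`. If `αq + βt = 1`, then `ψ_{qt}(r) = ψ_q(β r) ψ_t(α r)`, so through the Chinese
remainder isomorphism `ZMod (qt) ≃ ZMod q × ZMod t` each quadratic sum factors as
`V(qt, b) = V(q, β b) V(t, α b)`, and the condition that `(a₁, a₂)` generate the unit ideal
factors as well. The twists by the units `β mod q` and `α mod t` disappear on reindexing the
pairs `a ↦ β a`, `a ↦ α a`.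
-/

open Finset Complex

noncomputable def Vloc (q : ℕ) (b1 b2 : ℤ) : ℂ :=
  ∑ r ∈ Finset.Icc 1 q,
    Complex.exp (2 * Real.pi * Complex.I * (((b2 * r ^ 2 + b1 * r : ℤ) : ℝ) / q))

noncomputable def Vnorm (s : ℕ) (lam : Fin s → ℤ) (q : ℕ) : ℂ :=
  (q : ℂ) ^ (-(s : ℤ)) *
    ∑ a ∈ (Finset.Icc 1 q ×ˢ Finset.Icc 1 q).filter
        (fun a => Nat.gcd a.1 (Nat.gcd a.2 q) = 1),
      ∏ i, Vloc q (lam i * a.1) (lam i * a.2)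

theorem Prod.isCoprime_iff {R S : Type*} [CommSemiring R] [CommSemiring S] {x y : R × S} :
    IsCoprime x y ↔ IsCoprime x.1 y.1 ∧ IsCoprime x.2 y.2 := by
  refine ⟨fun h => ⟨h.map (RingHom.fst R S), h.map (RingHom.snd R S)⟩, ?_⟩
  rintro ⟨⟨u, v, huv⟩, ⟨u', v', huv'⟩⟩
  exact ⟨(u, u'), (v, v'), Prod.ext huv huv'⟩

theorem RingEquiv.isCoprime_iff {R S : Type*} [CommSemiring R] [CommSemiring S] (e : R ≃+* S)
    {x y : R} : IsCoprime (e x) (e y) ↔ IsCoprime x y :=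
  ⟨fun h => by simpa using h.map e.symm.toRingHom, fun h => h.map e.toRingHom⟩

namespace ZMod

theorem isCoprime_natCast_iff {N a b : ℕ} :
    IsCoprime (a : ZMod N) (b : ZMod N) ↔ Nat.gcd a (Nat.gcd b N) = 1 := by
  constructor
  · intro h
    set d := Nat.gcd a (Nat.gcd b N)
    have hdN : d ∣ N := (Nat.gcd_dvd_right _ _).trans (Nat.gcd_dvd_right _ _)
    have hd := h.map (castHom hdN (ZMod d))
    simp only [map_natCast, (natCast_eq_zero_iff _ _).2 (Nat.gcd_dvd_left a _),
      (natCast_eq_zero_iff _ _).2 ((Nat.gcd_dvd_right a _).trans (Nat.gcd_dvd_left b N)),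
      isCoprime_zero_left, isUnit_zero_iff] at hd
    simpa using (natCast_eq_zero_iff 1 d).1 (by simpa using hd.symm)
  · intro h
    have hZ : IsCoprime (a : ℤ) (b * Nat.gcdA b N + N * Nat.gcdB b N) := by
      rw [← Nat.gcd_eq_gcd_ab]; exact Nat.isCoprime_iff_coprime.2 h
    have := hZ.map (Int.castRingHom (ZMod N))
    simp only [eq_intCast, Int.cast_natCast, Int.cast_add, Int.cast_mul, natCast_self,
      zero_mul, add_zero] at this
    exact this.of_mul_right_left

theorem chineseRemainder_apply {m n : ℕ} (h : m.Coprime n) (x : ZMod (m * n)) :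
    chineseRemainder h x =
      (castHom (dvd_mul_right m n) (ZMod m) x, castHom (dvd_mul_left n m) (ZMod n) x) :=
  Prod.ext (Prod.fst_zmod_cast x) (Prod.snd_zmod_cast x)

theorem sum_Icc_one_natCast {M : Type*} [AddCommMonoid M] (N : ℕ) [NeZero N]
    (f : ZMod N → M) : ∑ r ∈ Icc 1 N, f r = ∑ r, f r := by
  refine sum_nbij' (fun r => (r : ZMod N)) (fun x => (x - 1).val + 1) (by simp) ?_ ?_ ?_
    (fun _ _ => rfl)
  · intro x _
    simpa using val_lt (x - 1)
  · intro r hr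
    obtain ⟨k, rfl⟩ := Nat.exists_eq_add_of_le' (mem_Icc.1 hr).1
    rw [Nat.cast_succ, add_sub_cancel_right, val_natCast,
      Nat.mod_eq_of_lt (by have := (mem_Icc.1 hr).2; omega)]
  · intro x _
    simp

theorem isUnit_intCast_of_mul_add_mul_eq_one {m n : ℕ} {a b : ℤ} (h : a * m + b * n = 1) :
    IsUnit (b : ZMod m) :=
  .of_mul_eq_one (n : ZMod m) (by simpa using congrArg (Int.cast : ℤ → ZMod m) h)

theorem stdAddChar_eq_mul_of_bezout {q t : ℕ} [NeZero q] [NeZero t] {α β : ℤ}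
    (h : α * q + β * t = 1) (r : ZMod (q * t)) :
    stdAddChar r = stdAddChar ((β : ZMod q) * castHom (dvd_mul_right q t) (ZMod q) r) *
      stdAddChar ((α : ZMod t) * castHom (dvd_mul_left t q) (ZMod t) r) := by
  obtain ⟨n, rfl⟩ := intCast_surjective r
  simp only [map_intCast, ← Int.cast_mul, stdAddChar_coe, ← Complex.exp_add]
  have hq : (q : ℂ) ≠ 0 := Nat.cast_ne_zero.2 (NeZero.ne q)
  have ht : (t : ℂ) ≠ 0 := Nat.cast_ne_zero.2 (NeZero.ne t)
  have h' : (α : ℂ) * q + β * t = 1 := by exact_mod_cast h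
  congr 1
  field_simp
  push_cast
  linear_combination (-(n * q * t : ℂ)) * h'

end ZMod

open ZMod

noncomputable def quadSum (N : ℕ) [NeZero N] (b₁ b₂ : ZMod N) : ℂ :=
  ∑ r, stdAddChar (b₂ * r ^ 2 + b₁ * r)

theorem Vloc_eq_quadSum (N : ℕ) [NeZero N] (b₁ b₂ : ℤ) :
    Vloc N b₁ b₂ = quadSum N b₁ b₂ := by
  rw [Vloc, quadSum, ← sum_Icc_one_natCast]
  refine sum_congr rfl fun r _ => ?_
  rw [← Int.cast_natCast (R := ZMod N), ← Int.cast_pow, ← Int.cast_mul, ← Int.cast_mul,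
    ← Int.cast_add, stdAddChar_coe]
  push_cast
  ring_nf

theorem quadSum_mul {q t : ℕ} [NeZero q] [NeZero t] (hqt : q.Coprime t) {α β : ℤ}
    (h : α * q + β * t = 1) (b₁ b₂ : ZMod (q * t)) :
    quadSum (q * t) b₁ b₂ =
      quadSum q (β * castHom (dvd_mul_right q t) (ZMod q) b₁)
          (β * castHom (dvd_mul_right q t) (ZMod q) b₂) *
        quadSum t (α * castHom (dvd_mul_left t q) (ZMod t) b₁)
          (α * castHom (dvd_mul_left t q) (ZMod t) b₂) := by
  rw [quadSum, quadSum, quadSum, sum_mul_sum, ← Fintype.sum_prod_type']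
  refine Fintype.sum_equiv (chineseRemainder hqt).toEquiv _ _ fun r => ?_
  simp only [RingEquiv.toEquiv_eq_coe, EquivLike.coe_coe, chineseRemainder_apply,
    stdAddChar_eq_mul_of_bezout h, map_add, map_mul, map_pow]
  ring_nf

section CoprimePairs

variable (s : ℕ) (lam : Fin s → ℤ)

open Classical in
noncomputable def coprimePairTerm (N : ℕ) [NeZero N] (a : ZMod N × ZMod N) : ℂ :=
  if IsCoprime a.1 a.2 then ∏ i, quadSum N (lam i * a.1) (lam i * a.2) else 0

theorem Vnorm_eq_sum_coprimePairTerm (N : ℕ) [NeZero N] :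
    Vnorm s lam N = (N : ℂ) ^ (-(s : ℤ)) * ∑ a, coprimePairTerm s lam N a := by
  have hterm : ∀ a₁ a₂ : ℕ,
      (if Nat.gcd a₁ (Nat.gcd a₂ N) = 1 then ∏ i, Vloc N (lam i * a₁) (lam i * a₂) else 0)
        = coprimePairTerm s lam N (a₁, a₂) := by
    intro a₁ a₂
    simp only [coprimePairTerm, isCoprime_natCast_iff, Vloc_eq_quadSum]
    push_cast
    rfl
  rw [Vnorm, sum_filter, sum_product, Fintype.sum_prod_type]
  simp only [hterm]
  rw [← sum_Icc_one_natCast N fun x => ∑ y, coprimePairTerm s lam N (x, y)]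
  refine congrArg _ (sum_congr rfl fun a₁ _ => ?_)
  exact sum_Icc_one_natCast N fun y => coprimePairTerm s lam N (a₁, y)

theorem sum_coprimePairTerm_smul {N : ℕ} [NeZero N] {c : ZMod N} (hc : IsUnit c) :
    ∑ a, coprimePairTerm s lam N (c • a) = ∑ a, coprimePairTerm s lam N a :=
  Fintype.sum_equiv (MulAction.toPerm hc.unit) _ _ fun _ => rfl

theorem coprimePairTerm_mul {q t : ℕ} [NeZero q] [NeZero t] (hqt : q.Coprime t) {α β : ℤ}
    (h : α * q + β * t = 1) (a : ZMod (q * t) × ZMod (q * t)) :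
    coprimePairTerm s lam (q * t) a =
      coprimePairTerm s lam q ((β : ZMod q) •
          a.map (castHom (dvd_mul_right q t) _) (castHom (dvd_mul_right q t) _)) *
        coprimePairTerm s lam t ((α : ZMod t) •
          a.map (castHom (dvd_mul_left t q) _) (castHom (dvd_mul_left t q) _)) := by
  have hβ : IsUnit (β : ZMod q) := isUnit_intCast_of_mul_add_mul_eq_one h
  have hα : IsUnit (α : ZMod t) :=
    isUnit_intCast_of_mul_add_mul_eq_one ((add_comm _ _).trans h)
  classical
  unfold coprimePairTerm
  rw [ite_zero_mul_ite_zero, ← prod_mul_distrib]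
  refine if_congr ?_ (prod_congr rfl fun i _ => ?_) rfl
  · simp only [Prod.smul_fst, Prod.smul_snd, Prod.map_fst, Prod.map_snd, smul_eq_mul,
      isCoprime_mul_unit_left hβ, isCoprime_mul_unit_left hα]
    rw [← (chineseRemainder hqt).isCoprime_iff, Prod.isCoprime_iff, chineseRemainder_apply,
      chineseRemainder_apply]
  · simp only [quadSum_mul hqt h, Prod.smul_fst, Prod.smul_snd, Prod.map_fst, Prod.map_snd,
      smul_eq_mul, map_mul, map_intCast, mul_left_comm (β : ZMod q), mul_left_comm (α : ZMod t)]

theorem sum_coprimePairTerm_mul {q t : ℕ} [NeZero q] [NeZero t] (hqt : q.Coprime t) :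
    ∑ a, coprimePairTerm s lam (q * t) a =
      (∑ a, coprimePairTerm s lam q a) * ∑ a, coprimePairTerm s lam t a := by
  obtain ⟨α, β, h⟩ := Nat.isCoprime_iff_coprime.2 hqt
  have hβ : IsUnit (β : ZMod q) := isUnit_intCast_of_mul_add_mul_eq_one h
  have hα : IsUnit (α : ZMod t) :=
    isUnit_intCast_of_mul_add_mul_eq_one ((add_comm _ _).trans h)
  let e := (chineseRemainder hqt).toEquiv
  calc ∑ a, coprimePairTerm s lam (q * t) a
      = ∑ a, coprimePairTerm s lam q ((β : ZMod q) •
            a.map (castHom (dvd_mul_right q t) _) (castHom (dvd_mul_right q t) _)) *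
          coprimePairTerm s lam t ((α : ZMod t) •
            a.map (castHom (dvd_mul_left t q) _) (castHom (dvd_mul_left t q) _)) :=
        sum_congr rfl fun a _ => coprimePairTerm_mul s lam hqt h a
    _ = ∑ x : (ZMod q × ZMod q) × (ZMod t × ZMod t),
          coprimePairTerm s lam q ((β : ZMod q) • x.1) *
            coprimePairTerm s lam t ((α : ZMod t) • x.2) :=
        Fintype.sum_equiv ((e.prodCongr e).trans (Equiv.prodProdProdComm _ _ _ _)) _ _ fun a => by
          simp only [e, RingEquiv.toEquiv_eq_coe, Equiv.trans_apply, Equiv.prodCongr_apply,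
            EquivLike.coe_coe, Equiv.prodProdProdComm_apply, Prod.map_fst, Prod.map_snd,
            chineseRemainder_apply]
          rfl
    _ = (∑ x, coprimePairTerm s lam q ((β : ZMod q) • x)) *
          ∑ y, coprimePairTerm s lam t ((α : ZMod t) • y) := by
        rw [Fintype.sum_mul_sum, Fintype.sum_prod_type]
    _ = _ := by rw [sum_coprimePairTerm_smul s lam hβ, sum_coprimePairTerm_smul s lam hα]

end CoprimePairs

theorem Vnorm_zero (s : ℕ) (lam : Fin s → ℤ) : Vnorm s lam 0 = 0 := by
  simp [Vnorm]

theorem stmt_9_general (s : ℕ) (lam : Fin s → ℤ)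
    (q t : ℕ) (hqt : Nat.gcd q t = 1) :
    Vnorm s lam (q * t) = Vnorm s lam q * Vnorm s lam t := by
  obtain rfl | hq := q.eq_zero_or_pos
  · simp [Vnorm_zero]
  obtain rfl | ht := t.eq_zero_or_pos
  · simp [Vnorm_zero]
  have : NeZero q := ⟨hq.ne'⟩
  have : NeZero t := ⟨ht.ne'⟩
  rw [Vnorm_eq_sum_coprimePairTerm, Vnorm_eq_sum_coprimePairTerm, Vnorm_eq_sum_coprimePairTerm,
    sum_coprimePairTerm_mul s lam hqt, Nat.cast_mul, mul_zpow]
  ring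

theorem stmt_9 (s : ℕ) (lam : Fin s → ℤ) (hlam : ∀ i, lam i ≠ 0)
    (q t : ℕ) (hq : 0 < q) (ht : 0 < t) (hqt : Nat.gcd q t = 1) :
    Vnorm s lam (q * t) = Vnorm s lam q * Vnorm s lam t :=
  stmt_9_general s lam q t hqt
end
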